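/- Let M be a matroid on a finite ground set E, let A be an independent set of M, let ℓ ≥ 1, and let δ : E → ℕ with δ(a) = 0 for all a ∈ A. Then δ is a basic ℓ-cover of the contraction M ⧸ A if and only if δ is a basic ℓ-cover of M. -/

import Mathlib

/-! A weight vanishing on `A` gives each base `B ∪ A` of `M` with `B` a base of `M ⧸ A` the
weight of `B`, and every base of `M` contains a base of `M ⧸ A` (extend `A` to a base inside
`A ∪ F` and remove `A`). So below `δ` the `ℓ`-covers of `M ⧸ A` and of `M` are the same
functions, and hence so are the basic ones. -/

open Matroid

/-- The total weight `δ(F) = ∑_{i ∈ F} δ(i)` of a finite set `F` under `δ`. -/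
noncomputable def setWt {α : Type*} [Fintype α] (γ : α → ℕ) (F : Set α) : ℕ :=
  ∑ i ∈ F.toFinite.toFinset, γ i

/-- `γ` is an `ℓ`-cover of the family `𝒟` if `γ(F) ≥ ℓ` for every `F ∈ 𝒟`. -/
def IsCoverOn {α : Type*} [Fintype α] (𝒟 : Set (Set α)) (ℓ : ℕ) (γ : α → ℕ) : Prop :=
  ∀ F ∈ 𝒟, ℓ ≤ setWt γ F

/-- An `ℓ`-cover is basic if no pointwise-smaller distinct function is an `ℓ`-cover. -/
def IsBasicCoverOn {α : Type*} [Fintype α] (𝒟 : Set (Set α)) (ℓ : ℕ) (γ : α → ℕ) : Prop :=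
  IsCoverOn 𝒟 ℓ γ ∧ ∀ γ' : α → ℕ, γ' ≤ γ → γ' ≠ γ → ¬ IsCoverOn 𝒟 ℓ γ'

/-- Matroid deletion: `M ⧹ D` is the restriction of `M` to `M.E \ D`. -/
def mdel {α : Type*} (M : Matroid α) (D : Set α) : Matroid α := M ↾ (M.E \ D)

/-- Matroid contraction: `M ⧸ C = (M✶ ⧹ C)✶`. -/
def mcon {α : Type*} (M : Matroid α) (C : Set α) : Matroid α := (mdel M✶ C)✶

lemma mcon_eq_contract {α : Type*} (M : Matroid α) (C : Set α) : mcon M C = M ／ C := rfl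

lemma Matroid.Indep.exists_contract_isBase_subset {α : Type*} {M : Matroid α} {A F : Set α}
    (hA : M.Indep A) (hF : M.IsBase F) : ∃ G, (M ／ A).IsBase G ∧ G ⊆ F := by
  obtain ⟨B, hB, hAB, hBAF⟩ := hA.exists_isBase_subset_union_isBase hF
  refine ⟨B \ A, ?_, ?_⟩
  · rw [hA.contract_isBase_iff, Set.sdiff_union_of_subset hAB]
    exact ⟨hB, Set.disjoint_sdiff_left⟩
  · rw [Set.sdiff_subset_iff]
    exact hBAF

section Weight

variable {α : Type*} [Fintype α]

lemma setWt_mono (γ : α → ℕ) {F G : Set α} (h : F ⊆ G) : setWt γ F ≤ setWt γ G :=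
  Finset.sum_le_sum_of_subset (Set.Finite.toFinset_subset_toFinset.mpr h)

lemma setWt_union_of_forall_eq_zero {γ : α → ℕ} {A : Set α} (hγA : ∀ a ∈ A, γ a = 0)
    (B : Set α) : setWt γ (B ∪ A) = setWt γ B := by
  refine (Finset.sum_subset (Set.Finite.toFinset_subset_toFinset.mpr Set.subset_union_left)
    fun x hx hxB ↦ hγA x ?_).symm
  simp only [Set.Finite.mem_toFinset] at hx hxB
  exact hx.resolve_left hxB

lemma IsCoverOn.of_forall_exists_setWt_le {𝒟 𝒟' : Set (Set α)} {ℓ : ℕ} {γ : α → ℕ}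
    (h : IsCoverOn 𝒟 ℓ γ) (h' : ∀ F ∈ 𝒟', ∃ G ∈ 𝒟, setWt γ G ≤ setWt γ F) :
    IsCoverOn 𝒟' ℓ γ := fun F hF ↦
  let ⟨G, hG, hGF⟩ := h' F hF
  (h G hG).trans hGF

lemma isBasicCoverOn_congr {𝒟 𝒟' : Set (Set α)} {ℓ : ℕ} {δ : α → ℕ}
    (h : ∀ γ ≤ δ, IsCoverOn 𝒟 ℓ γ ↔ IsCoverOn 𝒟' ℓ γ) :
    IsBasicCoverOn 𝒟 ℓ δ ↔ IsBasicCoverOn 𝒟' ℓ δ := by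
  unfold IsBasicCoverOn
  refine and_congr (h δ le_rfl) (forall_congr' fun γ ↦ ?_)
  exact imp_congr_right fun hγ ↦ imp_congr_right fun _ ↦ not_congr (h γ hγ)

lemma isCoverOn_contract_isBase_iff {M : Matroid α} {A : Set α} (hA : M.Indep A) (ℓ : ℕ)
    {γ : α → ℕ} (hγA : ∀ a ∈ A, γ a = 0) :
    IsCoverOn {F | (M ／ A).IsBase F} ℓ γ ↔ IsCoverOn {F | M.IsBase F} ℓ γ := by
  refine ⟨fun h ↦ h.of_forall_exists_setWt_le fun F hF ↦ ?_,
    fun h ↦ h.of_forall_exists_setWt_le fun B hB ↦ ?_⟩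
  · obtain ⟨G, hG, hGF⟩ := hA.exists_contract_isBase_subset hF
    exact ⟨G, hG, setWt_mono γ hGF⟩
  · exact ⟨B ∪ A, ((hA.contract_isBase_iff).mp hB).1,
      (setWt_union_of_forall_eq_zero hγA B).le⟩

end Weight

theorem stmt12_general {α : Type*} [Fintype α] (M : Matroid α)
    (A : Set α) (hA : M.Indep A) (ℓ : ℕ)
    (δ : α → ℕ) (hδA : ∀ a ∈ A, δ a = 0) :
    IsBasicCoverOn {F | (mcon M A).IsBase F} ℓ δ ↔
      IsBasicCoverOn {F | M.IsBase F} ℓ δ := by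
  rw [mcon_eq_contract]
  refine isBasicCoverOn_congr fun γ hγ ↦ isCoverOn_contract_isBase_iff hA ℓ fun a ha ↦ ?_
  exact Nat.eq_zero_of_le_zero (hδA a ha ▸ hγ a)

/-- let `A` be an independent set of a matroid `M`, `ℓ ≥ 1`, and `δ : E → ℕ`
vanish on `A`. Then `δ` is a basic `ℓ`-cover of the contraction `M ⧸ A` if and only if it is
a basic `ℓ`-cover of `M`. -/
theorem stmt12 {α : Type*} [Fintype α] (M : Matroid α) (hE : M.E = Set.univ)
    (A : Set α) (hA : M.Indep A) (ℓ : ℕ) (hℓ : 1 ≤ ℓ)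
    (δ : α → ℕ) (hδA : ∀ a ∈ A, δ a = 0) :
    IsBasicCoverOn {F | (mcon M A).IsBase F} ℓ δ ↔
      IsBasicCoverOn {F | M.IsBase F} ℓ δ :=
  stmt12_general M A hA ℓ δ hδA
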